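/- Let R be a skew category of partitions and n ∈ ℕ. Then F_n(R) := F_∞(R) ∩ ℤ₂^{*n} is an S_n-invariant normal subgroup of ℤ₂^{*n}, and R_n := {p ∈ R : p has at most n blocks} = {p ∈ P : p is a rotation of ker(i) for some i with a_i ∈ F_n(R)}. -/

import Mathlib

attribute [local instance] Classical.propDecidable

noncomputable section

namespace GTQG

/-! ## Partitions -/

/-- The set `P(k,l)` of partitions of `{1,…,k,1',…,l'}`, encoded as equivalence
relations (i.e. set partitions) on the disjoint union `Fin k ⊕ Fin l`. -/
abbrev Part (k l : ℕ) : Type := Setoid (Fin k ⊕ Fin l)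

/-- `ker(i,j)`: the partition whose blocks are the fibers of the labelling
`x ↦ i x` on upper points and `y ↦ j y` on lower points. -/
def kerPartA {α : Type*} {k l : ℕ} (i : Fin k → α) (j : Fin l → α) : Part k l :=
  Setoid.ker (Sum.elim i j)

/-- `ker(i,j)` for `ℕ`-valued multi-indices. -/
abbrev kerPart {k l : ℕ} (i : Fin k → ℕ) (j : Fin l → ℕ) : Part k l := kerPartA i j

/-- `ker(i) = ker(i,∅) ∈ P(k,0)`. -/
def kerPart0 {k : ℕ} (i : Fin k → ℕ) : Part k 0 := kerPartA i Fin.elim0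

/-- The pair partition `⊔ ∈ P(0,2)`. -/
def pairPart : Part 0 2 := kerPartA Fin.elim0 (fun _ => (1 : ℕ))

/-- The identity partition `| ∈ P(1,1)`. -/
def idPart : Part 1 1 := kerPartA (fun _ => (1 : ℕ)) (fun _ => (1 : ℕ))

/-- The partition `p̂ = ker((1,1,2),(2,1,1)) ∈ P(3,3)`. -/
def pHat : Part 3 3 := kerPart ![1, 1, 2] ![2, 1, 1]

/-- The involution `p* ∈ P(l,k)`, turning `p` upside-down. -/
def invol {k l : ℕ} (p : Part k l) : Part l k := Setoid.comap Sum.swap p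

/-- The number of blocks of a partition. -/
def blockCount {k l : ℕ} (p : Part k l) : ℕ := Nat.card (Quotient p)

/-- The restriction of `p` to its upper row. -/
def upperSetoid {k l : ℕ} (p : Part k l) : Setoid (Fin k) := Setoid.comap Sum.inl p

/-- The restriction of `p` to its lower row. -/
def lowerSetoid {k l : ℕ} (p : Part k l) : Setoid (Fin l) := Setoid.comap Sum.inr p

/-- `p ∈ P(k,l)` and `q ∈ P(l,l')` are compatible if the lower row of `p`
and the upper row of `q` have the same block structure
(i.e. `j^(p) ∈ S_∞(i^(q))`). -/
def Compatible {k l l' : ℕ} (p : Part k l) (q : Part l l') : Prop :=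
  lowerSetoid p = upperSetoid q

section Comp

variable {k l l' : ℕ}

/-- The points of the vertical concatenation of `p ∈ P(k,l)` and `q ∈ P(l,l')`:
`k` upper points, `l` middle points, `l'` lower points. -/
abbrev CompCarrier (k l l' : ℕ) : Type := Fin k ⊕ (Fin l ⊕ Fin l')

/-- Inclusion of the points of `p` into the vertical concatenation. -/
def topIncl : Fin k ⊕ Fin l → CompCarrier k l l' := Sum.map id Sum.inl

/-- Inclusion of the points of `q` into the vertical concatenation. -/
def botIncl : Fin l ⊕ Fin l' → CompCarrier k l l' := Sum.inr

/-- Two points of the vertical concatenation are directly connected if they are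
connected by a string of `p` or by a string of `q`. -/
def compRel (p : Part k l) (q : Part l l') :
    CompCarrier k l l' → CompCarrier k l l' → Prop := fun x y =>
  (∃ u v, p u v ∧ x = topIncl u ∧ y = topIncl v) ∨
  (∃ u v, q u v ∧ x = botIncl u ∧ y = botIncl v)

/-- The partition of all points of the vertical concatenation of `p` and `q`
into connected components. -/
def middleJoin (p : Part k l) (q : Part l l') : Setoid (CompCarrier k l l') :=
  Relation.EqvGen.setoid (compRel p q)

/-- The composition `qp ∈ P(k,l')`: vertical concatenation with all loops removed. -/
def compPart (p : Part k l) (q : Part l l') : Part k l' :=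
  Setoid.comap (Sum.map id Sum.inr) (middleJoin p q)

/-- A point of the vertical concatenation is a middle point. -/
def IsMiddle (x : CompCarrier k l l') : Prop := ∃ m : Fin l, x = Sum.inr (Sum.inl m)

/-- The number `l(q,p)` of loops in the vertical concatenation of `p` and `q`:
connected components consisting entirely of middle points. -/
def loopCount (p : Part k l) (q : Part l l') : ℕ :=
  Nat.card {c : Quotient (middleJoin p q) //
    ∀ x : CompCarrier k l l', Quotient.mk (middleJoin p q) x = c → IsMiddle x}

end Comp

/-- The direct sum of two set partitions. -/
def sumSetoid {α β : Type*} (p : Setoid α) (q : Setoid β) : Setoid (α ⊕ β) :=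
  Setoid.ker (Sum.map (Quotient.mk p) (Quotient.mk q))

/-- The tensor product `p ⊗ q ∈ P(k+k',l+l')`: horizontal concatenation. -/
def tensorPart {k l k' l' : ℕ} (p : Part k l) (q : Part k' l') : Part (k + k') (l + l') :=
  Setoid.comap
    (Sum.elim
      (fun z => Fin.addCases (fun a => Sum.inl (Sum.inl a)) (fun b => Sum.inr (Sum.inl b)) z)
      (fun z => Fin.addCases (fun a => Sum.inl (Sum.inr a)) (fun b => Sum.inr (Sum.inr b)) z))
    (sumSetoid p q)

/-! ## Rotations -/

/-- Rotating the outermost left upper leg to the lower row (reindexing map). -/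
def rotULDmap (k l : ℕ) : Fin k ⊕ Fin (l + 1) → Fin (k + 1) ⊕ Fin l
  | .inl x => .inl x.succ
  | .inr y => Fin.cases (Sum.inl 0) (fun i => Sum.inr i) y

/-- Rotating the outermost left upper leg to the lower row. -/
def rotULD {k l : ℕ} (p : Part (k + 1) l) : Part k (l + 1) :=
  Setoid.comap (rotULDmap k l) p

/-- Rotating the outermost left lower leg to the upper row (reindexing map). -/
def rotDLUmap (k l : ℕ) : Fin (k + 1) ⊕ Fin l → Fin k ⊕ Fin (l + 1)
  | .inl x => Fin.cases (Sum.inr 0) (fun i => Sum.inl i) x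
  | .inr y => .inr y.succ

/-- Rotating the outermost left lower leg to the upper row. -/
def rotDLU {k l : ℕ} (p : Part k (l + 1)) : Part (k + 1) l :=
  Setoid.comap (rotDLUmap k l) p

/-- Rotating the outermost right upper leg to the lower row (reindexing map). -/
def rotURDmap (k l : ℕ) : Fin k ⊕ Fin (l + 1) → Fin (k + 1) ⊕ Fin l
  | .inl x => .inl x.castSucc
  | .inr y => Fin.lastCases (Sum.inl (Fin.last k)) (fun i => Sum.inr i) y

/-- Rotating the outermost right upper leg to the lower row. -/
def rotURD {k l : ℕ} (p : Part (k + 1) l) : Part k (l + 1) :=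
  Setoid.comap (rotURDmap k l) p

/-- Rotating the outermost right lower leg to the upper row (reindexing map). -/
def rotDRUmap (k l : ℕ) : Fin (k + 1) ⊕ Fin l → Fin k ⊕ Fin (l + 1)
  | .inl x => Fin.lastCases (Sum.inr (Fin.last l)) (fun i => Sum.inl i) x
  | .inr y => .inr y.castSucc

/-- Rotating the outermost right lower leg to the upper row. -/
def rotDRU {k l : ℕ} (p : Part k (l + 1)) : Part (k + 1) l :=
  Setoid.comap (rotDRUmap k l) p

/-- One basic rotation step between partitions (with varying numbers of
upper and lower points). -/
inductive BasicRot : (Σ k l : ℕ, Part k l) → (Σ k l : ℕ, Part k l) → Prop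
  | uld {k l : ℕ} (p : Part (k + 1) l) : BasicRot ⟨k + 1, l, p⟩ ⟨k, l + 1, rotULD p⟩
  | dlu {k l : ℕ} (p : Part k (l + 1)) : BasicRot ⟨k, l + 1, p⟩ ⟨k + 1, l, rotDLU p⟩
  | urd {k l : ℕ} (p : Part (k + 1) l) : BasicRot ⟨k + 1, l, p⟩ ⟨k, l + 1, rotURD p⟩
  | dru {k l : ℕ} (p : Part k (l + 1)) : BasicRot ⟨k, l + 1, p⟩ ⟨k + 1, l, rotDRU p⟩

/-- `IsRotationOf q p`: `q` is obtained from `p` by finitely many basic rotations. -/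
def IsRotationOf (q p : Σ k l : ℕ, Part k l) : Prop := Relation.ReflTransGen BasicRot p q

/-- A family `R ⊆ P` is closed under rotation. -/
def RotationClosed (R : ∀ k l : ℕ, Set (Part k l)) : Prop :=
  ∀ {k l k' l' : ℕ} (p : Part k l) (q : Part k' l'),
    p ∈ R k l → IsRotationOf ⟨k', l', q⟩ ⟨k, l, p⟩ → q ∈ R k' l'

/-! ## (Skew) categories of partitions -/

/-- A skew category of partitions: a collection `R ⊆ P` containing `⊔` and `|`,
closed under involution, connected tensor products and conditioned composition. -/
structure IsSkewCategory (R : ∀ k l : ℕ, Set (Part k l)) : Prop where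
  pair_mem : pairPart ∈ R 0 2
  id_mem : idPart ∈ R 1 1
  invol_mem : ∀ {k l : ℕ} {p : Part k l}, p ∈ R k l → invol p ∈ R l k
  conn_tensor_mem : ∀ {k l k' l' : ℕ} {p : Part k l} {q : Part k' l'}
      (i : Fin k → ℕ) (j : Fin l → ℕ) (f : Fin k' → ℕ) (g : Fin l' → ℕ),
      p ∈ R k l → q ∈ R k' l' → kerPart i j = p → kerPart f g = q →
      kerPart (Fin.append i f) (Fin.append j g) ∈ R (k + k') (l + l')
  cond_comp_mem : ∀ {k l l' : ℕ} {p : Part k l} {q : Part l l'},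
      p ∈ R k l → q ∈ R l l' → Compatible p q → compPart p q ∈ R k l'

/-- A category of partitions: a collection `C ⊆ P` containing `⊔` and `|`,
closed under involution, tensor products and composition. -/
structure IsCategoryOfPartitions (C : ∀ k l : ℕ, Set (Part k l)) : Prop where
  pair_mem : pairPart ∈ C 0 2
  id_mem : idPart ∈ C 1 1
  invol_mem : ∀ {k l : ℕ} {p : Part k l}, p ∈ C k l → invol p ∈ C l k
  tensor_mem : ∀ {k l k' l' : ℕ} {p : Part k l} {q : Part k' l'},
      p ∈ C k l → q ∈ C k' l' → tensorPart p q ∈ C (k + k') (l + l')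
  comp_mem : ∀ {k l l' : ℕ} {p : Part k l} {q : Part l l'},
      p ∈ C k l → q ∈ C l l' → compPart p q ∈ C k l'

/-- The skew category of partitions generated by a family `E`. -/
def skewGenerated (E : ∀ k l : ℕ, Set (Part k l)) : ∀ k l : ℕ, Set (Part k l) :=
  fun k l => { p | ∀ R : ∀ k l : ℕ, Set (Part k l),
    IsSkewCategory R → (∀ k' l' : ℕ, E k' l' ⊆ R k' l') → p ∈ R k l }

/-- The category of partitions generated by a family `E`. -/
def catGenerated (E : ∀ k l : ℕ, Set (Part k l)) : ∀ k l : ℕ, Set (Part k l) :=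
  fun k l => { p | ∀ C : ∀ k l : ℕ, Set (Part k l),
    IsCategoryOfPartitions C → (∀ k' l' : ℕ, E k' l' ⊆ C k' l') → p ∈ C k l }

end GTQG
namespace GTQG

/-! ## The free products `ℤ₂^{*∞}` and `ℤ₂^{*n}` -/

/-- The cyclic group of order two (written multiplicatively). -/
abbrev Z2 : Type := Multiplicative (ZMod 2)

/-- `ℤ₂^{*∞}`, the free product of countably many copies of `ℤ₂`. -/
abbrev FreeZ2 : Type := Monoid.CoprodI (fun _ : ℕ => Z2)

/-- `ℤ₂^{*n}`, the free product of `n` copies of `ℤ₂`. -/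
abbrev FreeZ2n (n : ℕ) : Type := Monoid.CoprodI (fun _ : Fin n => Z2)

/-- The generator `a_i` of `ℤ₂^{*∞}`. -/
def gen (i : ℕ) : FreeZ2 := Monoid.CoprodI.of (i := i) (Multiplicative.ofAdd (1 : ZMod 2))

/-- The generator `a_i` of `ℤ₂^{*n}`. -/
def genn {n : ℕ} (i : Fin n) : FreeZ2n n :=
  Monoid.CoprodI.of (i := i) (Multiplicative.ofAdd (1 : ZMod 2))

/-- The word `a_i = a_{i₁} ⋯ a_{i_k} ∈ ℤ₂^{*∞}` associated to a multi-index. -/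
def aWord {k : ℕ} (i : Fin k → ℕ) : FreeZ2 := (List.ofFn fun x => gen (i x)).prod

/-- The word `a_i = a_{i₁} ⋯ a_{i_k} ∈ ℤ₂^{*n}` associated to a multi-index. -/
def aWordn {n k : ℕ} (i : Fin k → Fin n) : FreeZ2n n := (List.ofFn fun x => genn (i x)).prod

/-- The natural embedding `ℤ₂^{*n} → ℤ₂^{*∞}`. -/
def incl (n : ℕ) : FreeZ2n n →* FreeZ2 :=
  Monoid.CoprodI.lift (fun i => Monoid.CoprodI.of (M := fun _ : ℕ => Z2) (i := (i : ℕ)))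

/-- The endomorphism of `ℤ₂^{*∞}` induced by a map `σ : ℕ → ℕ`, `a_i ↦ a_{σ i}`.
For bijective `σ` this is the action of `S_∞`, in general that of `sS_∞`. -/
def permEndo (σ : ℕ → ℕ) : FreeZ2 →* FreeZ2 :=
  Monoid.CoprodI.lift (fun i => Monoid.CoprodI.of (M := fun _ : ℕ => Z2) (i := σ i))

/-- The endomorphism of `ℤ₂^{*n}` induced by a map `σ : Fin n → Fin n`. -/
def permEndon {n : ℕ} (σ : Fin n → Fin n) : FreeZ2n n →* FreeZ2n n :=
  Monoid.CoprodI.lift (fun i => Monoid.CoprodI.of (M := fun _ : Fin n => Z2) (i := σ i))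

/-- A map `ℕ → ℕ` is finitely supported (moves only finitely many points). -/
def FinitelySupported (σ : ℕ → ℕ) : Prop := {x | σ x ≠ x}.Finite

/-- `F_∞(D) = S_∞({a_{ind(p)} : p ∈ D(k,0)})`, the set of all words `a_i` with
`ker(i) ∈ D(k,0)` (the `S_∞`-orbit of the words of minimal-index labellings). -/
def Finfty (D : ∀ k l : ℕ, Set (Part k l)) : Set FreeZ2 :=
  { g | ∃ (k : ℕ) (i : Fin k → ℕ), kerPart0 i ∈ D k 0 ∧ g = aWord i }

end GTQG
namespace GTQG

/-! ## The maps `T̂_p` and `T_p` -/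

/-- `(ℂ^n)^{⊗k}`, realised as functions on multi-indices (the standard basis
`e_{i₁} ⊗ ⋯ ⊗ e_{i_k}` is indexed by multi-indices `i ∈ {1,…,n}^k`). -/
abbrev MV (n k : ℕ) : Type := (Fin k → Fin n) → ℂ

/-- `δ̂_p(i,j) = 1` iff `(i,j) ∈ S_∞(ind(p))`, i.e. iff `ker(i,j) = p`. -/
def hatDelta {k l : ℕ} (p : Part k l) {n : ℕ} (i : Fin k → Fin n) (j : Fin l → Fin n) : ℂ :=
  if kerPartA i j = p then 1 else 0

/-- `δ_p(i,j) = 1` iff `(i,j) ∈ sS_∞(ind(p))`, i.e. iff the labelling `(i,j)`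
is constant on the blocks of `p`. -/
def softDelta {k l : ℕ} (p : Part k l) {n : ℕ} (i : Fin k → Fin n) (j : Fin l → Fin n) : ℂ :=
  if p ≤ kerPartA i j then 1 else 0

/-- The linear map `T̂_p^(n) : (ℂ^n)^{⊗k} → (ℂ^n)^{⊗l}`. -/
def hatT (n : ℕ) {k l : ℕ} (p : Part k l) : MV n k →ₗ[ℂ] MV n l :=
  Matrix.mulVecLin (Matrix.of fun (j : Fin l → Fin n) (i : Fin k → Fin n) => hatDelta p i j)

/-- The linear map `T_p^(n) : (ℂ^n)^{⊗k} → (ℂ^n)^{⊗l}` of Banica–Speicher. -/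
def softT (n : ℕ) {k l : ℕ} (p : Part k l) : MV n k →ₗ[ℂ] MV n l :=
  Matrix.mulVecLin (Matrix.of fun (j : Fin l → Fin n) (i : Fin k → Fin n) => softDelta p i j)

/-- The tensor product of linear maps, under the identification
`(ℂ^n)^{⊗k} ⊗ (ℂ^n)^{⊗k'} ≅ (ℂ^n)^{⊗(k+k')}` of basis vectors
`(e_{i} ⊗ e_{f} ↦ e_{if}`, concatenation of multi-indices). -/
def tensorMap {n k l k' l' : ℕ} (S : MV n k →ₗ[ℂ] MV n l) (T : MV n k' →ₗ[ℂ] MV n l') :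
    MV n (k + k') →ₗ[ℂ] MV n (l + l') :=
  Matrix.mulVecLin (Matrix.of fun (x : Fin (l + l') → Fin n) (y : Fin (k + k') → Fin n) =>
    LinearMap.toMatrix' S (fun a => x (Fin.castAdd l' a)) (fun a => y (Fin.castAdd k' a)) *
    LinearMap.toMatrix' T (fun b => x (Fin.natAdd l b)) (fun b => y (Fin.natAdd k b)))

/-- The adjoint of a linear map `(ℂ^n)^{⊗k} → (ℂ^n)^{⊗l}` with respect to the
standard Hermitian inner products (conjugate-transpose of the matrix in the
standard bases). -/
def adjointMap {n k l : ℕ} (S : MV n k →ₗ[ℂ] MV n l) : MV n l →ₗ[ℂ] MV n k :=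
  Matrix.mulVecLin (LinearMap.toMatrix' S).conjTranspose

/-- The map `ζ : ℂ → (ℂ^n)^{⊗2}`, `1 ↦ Σᵢ eᵢ ⊗ eᵢ`. -/
def zetaMap (n : ℕ) : MV n 0 →ₗ[ℂ] MV n 2 :=
  Matrix.mulVecLin (Matrix.of fun (j : Fin 2 → Fin n) (_ : Fin 0 → Fin n) =>
    if j 0 = j 1 then (1 : ℂ) else 0)

/-- A tensor category with duals (of subspaces of `Hom((ℂ^n)^{⊗k}, (ℂ^n)^{⊗l})`). -/
structure IsTensorCategoryWithDuals (n : ℕ)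
    (H : ∀ k l : ℕ, Submodule ℂ (MV n k →ₗ[ℂ] MV n l)) : Prop where
  tensor_mem : ∀ {k l k' l' : ℕ} (S : MV n k →ₗ[ℂ] MV n l) (T : MV n k' →ₗ[ℂ] MV n l'),
      S ∈ H k l → T ∈ H k' l' → tensorMap S T ∈ H (k + k') (l + l')
  comp_mem : ∀ {k l l' : ℕ} (S : MV n k →ₗ[ℂ] MV n l) (T : MV n l →ₗ[ℂ] MV n l'),
      S ∈ H k l → T ∈ H l l' → T ∘ₗ S ∈ H k l'
  adjoint_mem : ∀ {k l : ℕ} (S : MV n k →ₗ[ℂ] MV n l), S ∈ H k l → adjointMap S ∈ H l k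
  id_mem : LinearMap.id ∈ H 1 1
  zeta_mem : zetaMap n ∈ H 0 2

/-- The collection of subspaces `span{T̂_p^(n) : p ∈ R(k,l)}`. -/
def spanOf (n : ℕ) (R : ∀ k l : ℕ, Set (Part k l)) :
    ∀ k l : ℕ, Submodule ℂ (MV n k →ₗ[ℂ] MV n l) :=
  fun k l => Submodule.span ℂ {T | ∃ p ∈ R k l, T = hatT n p}

/-- All connected tensor products of `p` and `q`. -/
def connTensorSet {k l k' l' : ℕ} (p : Part k l) (q : Part k' l') :
    Set (Part (k + k') (l + l')) :=
  { r | ∃ (i : Fin k → ℕ) (j : Fin l → ℕ) (f : Fin k' → ℕ) (g : Fin l' → ℕ),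
      kerPart i j = p ∧ kerPart f g = q ∧ r = kerPart (Fin.append i f) (Fin.append j g) }

/-- All connected conditioned compositions of `p` and `q`. -/
def connCompSet {k l l' : ℕ} (p : Part k l) (q : Part l l') : Set (Part k l') :=
  { r | ∃ (i : Fin k → ℕ) (h : Fin l → ℕ) (g : Fin l' → ℕ),
      kerPart i h = p ∧ kerPart h g = q ∧ r = kerPart i g }

end GTQG
namespace GTQG

/-!
Label the points of a partition by natural numbers and read its two rows as words `(L, M)`.
For such labelled diagrams the skew-category operations become concatenation of rows
(tensor product) and composition along a middle row that contains every label shared by the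
outer rows (conditioned composition), so the pair partition and the identity generate all
rotations, reversal, conjugation and the insertion or deletion of a letter pair `cc` on the
words `L` with `ker(L) ∈ R`. Insertion and deletion make membership a property of the element
`a_L ∈ ℤ₂^{*∞}` alone, because words with the same image have the same reduced word; hence
`F_∞(R)` is a normal subgroup, stable under injective relabellings of the generators.
Rotations preserve membership in `R` and the number of blocks, every partition rotates to one
with empty lower row, and `ker(i) ∈ P(k,0)` has at most `n` blocks iff it can be labelled by
`n` letters.
-/

lemma ofFn_snoc {α : Type*} {m : ℕ} (f : Fin m → α) (c : α) :
    List.ofFn (Fin.snoc f c : Fin (m + 1) → α) = List.ofFn f ++ [c] := by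
  rw [List.ofFn_succ']
  simp

lemma ofFn_eq_ofFn_init_append {α : Type*} {m : ℕ} (f : Fin (m + 1) → α) :
    List.ofFn f = List.ofFn (Fin.init f) ++ [f (Fin.last m)] := by
  rw [← ofFn_snoc, Fin.snoc_init_self]

section Kernel

variable {α β : Type*} {k l : ℕ}

lemma kerPartA_comp_of_injective {f : α → β} (hf : Function.Injective f)
    (i : Fin k → α) (j : Fin l → α) : kerPartA (f ∘ i) (f ∘ j) = kerPartA i j :=
  Setoid.ext fun x y => by cases x <;> cases y <;> exact hf.eq_iff

lemma kerPartA_comp_elim0_of_injective {f : α → β} (hf : Function.Injective f)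
    (i : Fin k → α) : kerPartA (f ∘ i) (Fin.elim0 : Fin 0 → β) = kerPartA i Fin.elim0 := by
  rw [← kerPartA_comp_of_injective hf i Fin.elim0]
  exact congrArg _ (Subsingleton.elim _ _)

lemma kerPartA_eq_of_injective {p : Part k l} {f : Quotient p → α}
    (hf : Function.Injective f) :
    kerPartA (f ∘ Quotient.mk p ∘ Sum.inl) (f ∘ Quotient.mk p ∘ Sum.inr) = p :=
  Setoid.ext fun x y => by
    cases x <;> cases y <;> exact hf.eq_iff.trans Quotient.eq

lemma exists_kerPart_eq (p : Part k l) : ∃ (i : Fin k → ℕ) (j : Fin l → ℕ), kerPart i j = p :=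
  let ⟨_, hf⟩ := Countable.exists_injective_nat (Quotient p)
  ⟨_, _, kerPartA_eq_of_injective hf⟩

lemma blockCount_kerPartA_le [Finite α] (i : Fin k → α) (j : Fin l → α) :
    blockCount (kerPartA i j) ≤ Nat.card α :=
  (Nat.card_congr (Setoid.quotientKerEquivRange _)).trans_le (Finite.card_subtype_le _)

lemma exists_kerPartA_fin_eq {n : ℕ} (p : Part k l) (h : blockCount p ≤ n) :
    ∃ (i : Fin k → Fin n) (j : Fin l → Fin n), kerPartA i j = p := by
  have := Fintype.ofFinite (Quotient p)
  obtain ⟨f⟩ : Nonempty (Quotient p ↪ Fin n) := Function.Embedding.nonempty_of_card_le <| by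
    rwa [Fintype.card_fin, ← Nat.card_eq_fintype_card]
  exact ⟨_, _, kerPartA_eq_of_injective f.injective⟩

lemma exists_kerPart0_fin_eq {n m : ℕ} (p : Part m 0) (h : blockCount p ≤ n) :
    ∃ i : Fin m → Fin n, kerPart0 (fun x => (i x : ℕ)) = p := by
  obtain ⟨i, j, rfl⟩ := exists_kerPartA_fin_eq p h
  refine ⟨i, ?_⟩
  rw [kerPart0, ← Subsingleton.elim Fin.elim0 j]
  exact kerPartA_comp_elim0_of_injective Fin.val_injective i

lemma blockCount_kerPart0_fin_le {n m : ℕ} (i : Fin m → Fin n) :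
    blockCount (kerPart0 fun x => (i x : ℕ)) ≤ n := by
  rw [kerPart0, show (fun x => (i x : ℕ)) = Fin.val ∘ i from rfl,
    kerPartA_comp_elim0_of_injective Fin.val_injective i]
  simpa using blockCount_kerPartA_le i Fin.elim0

lemma invol_kerPartA (i : Fin k → α) (j : Fin l → α) : invol (kerPartA i j) = kerPartA j i :=
  Setoid.ext fun x y => by cases x <;> cases y <;> rfl

end Kernel

section KerMem

def KerMem (R : ∀ k l : ℕ, Set (Part k l)) (L M : List ℕ) : Prop :=
  ∃ (a b : ℕ) (i : Fin a → ℕ) (j : Fin b → ℕ),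
    List.ofFn i = L ∧ List.ofFn j = M ∧ kerPart i j ∈ R a b

variable {R : ∀ k l : ℕ, Set (Part k l)}

lemma KerMem.mem {L M : List ℕ} (h : KerMem R L M) {a b : ℕ} {i : Fin a → ℕ} {j : Fin b → ℕ}
    (hi : List.ofFn i = L) (hj : List.ofFn j = M) : kerPart i j ∈ R a b := by
  obtain ⟨a', b', i', j', rfl, rfl, hmem⟩ := h
  cases List.ofFn_inj'.mp hi
  cases List.ofFn_inj'.mp hj
  exact hmem

lemma compPart_kerPartA {α : Type*} {k l l' : ℕ} (i : Fin k → α) (h : Fin l → α)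
    (g : Fin l' → α) (hshared : ∀ a b, i a = g b → ∃ m, h m = i a) :
    compPart (kerPartA i h) (kerPartA h g) = kerPartA i g := by
  set label : CompCarrier k l l' → α := Sum.elim i (Sum.elim h g)
  have hle : middleJoin (kerPartA i h) (kerPartA h g) ≤ Setoid.ker label := by
    refine Setoid.eqvGen_le ?_
    rintro _ _ (⟨u, v, huv, rfl, rfl⟩ | ⟨u, v, huv, rfl, rfl⟩) <;>
      cases u <;> cases v <;> exact huv
  have hmiddle : ∀ a b, i a = g b →
      middleJoin (kerPartA i h) (kerPartA h g) (.inl a) (.inr (.inr b)) := by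
    intro a b hab
    obtain ⟨m, hm⟩ := hshared a b hab
    exact .trans _ (.inr (.inl m)) _
      (.rel _ _ (.inl ⟨.inl a, .inr m, hm.symm, rfl, rfl⟩))
      (.rel _ _ (.inr ⟨.inl m, .inr b, hm.trans hab, rfl, rfl⟩))
  refine Setoid.ext fun x y => ⟨fun hxy => ?_, fun hxy => ?_⟩
  · have := hle hxy
    cases x <;> cases y <;> exact this
  · rcases x with a | a <;> rcases y with b | b
    · exact .rel _ _ (.inl ⟨.inl a, .inl b, hxy, rfl, rfl⟩)
    · exact hmiddle a b hxy
    · exact .symm _ _ (hmiddle b a hxy.symm)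
    · exact .rel _ _ (.inr ⟨.inr a, .inr b, hxy, rfl, rfl⟩)

variable (hR : IsSkewCategory R)
include hR

lemma KerMem.append {L₁ M₁ L₂ M₂ : List ℕ} (h₁ : KerMem R L₁ M₁) (h₂ : KerMem R L₂ M₂) :
    KerMem R (L₁ ++ L₂) (M₁ ++ M₂) := by
  obtain ⟨a, b, i, j, rfl, rfl, hm₁⟩ := h₁
  obtain ⟨a', b', f, g, rfl, rfl, hm₂⟩ := h₂
  exact ⟨a + a', b + b', Fin.append i f, Fin.append j g, List.ofFn_fin_append i f,
    List.ofFn_fin_append j g, hR.conn_tensor_mem i j f g hm₁ hm₂ rfl rfl⟩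

lemma KerMem.symm {L M : List ℕ} (h : KerMem R L M) : KerMem R M L := by
  obtain ⟨a, b, i, j, rfl, rfl, hm⟩ := h
  refine ⟨b, a, j, i, rfl, rfl, ?_⟩
  rw [kerPart, ← invol_kerPartA]
  exact hR.invol_mem hm

lemma KerMem.trans {L M N : List ℕ} (h₁ : KerMem R L M) (h₂ : KerMem R M N)
    (hshared : ∀ c ∈ L, c ∈ N → c ∈ M) : KerMem R L N := by
  obtain ⟨a, b, i, h, rfl, rfl, hm₁⟩ := h₁
  obtain ⟨c, g, rfl, hm₂⟩ : ∃ (c : ℕ) (g : Fin c → ℕ), List.ofFn g = N ∧ kerPart h g ∈ R b c :=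
    let ⟨_, c, _, g, _, hg, _⟩ := h₂; ⟨c, g, hg, h₂.mem rfl hg⟩
  refine ⟨a, c, i, g, rfl, rfl, ?_⟩
  -- two labelled diagrams sharing the middle labelling are always compatible
  rw [kerPart, ← compPart_kerPartA i h g fun x y hxy => List.mem_ofFn.mp <|
    hshared _ (List.mem_ofFn.mpr ⟨x, rfl⟩) (hxy ▸ List.mem_ofFn.mpr ⟨y, rfl⟩)]
  exact hR.cond_comp_mem hm₁ hm₂ (Setoid.ext fun _ _ => Iff.rfl)

lemma kerMem_singleton (c : ℕ) : KerMem R [c] [c] := by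
  refine ⟨1, 1, fun _ => c, fun _ => c, rfl, rfl, ?_⟩
  convert hR.id_mem using 1
  exact Setoid.ext fun x y => by cases x <;> cases y <;> exact iff_of_true rfl rfl

lemma kerMem_nil_pair (c : ℕ) : KerMem R [] [c, c] := by
  refine ⟨0, 2, Fin.elim0, fun _ => c, rfl, rfl, ?_⟩
  convert hR.pair_mem using 1
  refine Setoid.ext fun x y => ?_
  rcases x with x | x
  · exact x.elim0
  rcases y with y | y
  · exact y.elim0
  exact iff_of_true rfl rfl

lemma kerMem_pair_nil (c : ℕ) : KerMem R [c, c] [] := (kerMem_nil_pair hR c).symm hR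

lemma kerMem_nil : KerMem R [] [] :=
  (kerMem_nil_pair hR 0).trans hR (kerMem_pair_nil hR 0) fun _ h _ => absurd h List.not_mem_nil

lemma kerMem_refl (M : List ℕ) : KerMem R M M := by
  induction M with
  | nil => exact kerMem_nil hR
  | cons c M ih => exact (kerMem_singleton hR c).append hR ih

lemma KerMem.rotate_head_up {L M : List ℕ} {c : ℕ} (h : KerMem R L (c :: M)) :
    KerMem R (c :: L) M :=
  ((kerMem_singleton hR c).append hR h).trans hR
    ((kerMem_pair_nil hR c).append hR (kerMem_refl hR M)) fun _ _ hd => by simp [hd]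

lemma KerMem.rotate_head_down {L M : List ℕ} {c : ℕ} (h : KerMem R (c :: L) M) :
    KerMem R L (c :: M) :=
  ((kerMem_nil_pair hR c).append hR (kerMem_refl hR L)).trans hR
    ((kerMem_singleton hR c).append hR h) fun _ hd _ => by simp_all

lemma KerMem.rotate_last_up {L M : List ℕ} {c : ℕ} (h : KerMem R L (M ++ [c])) :
    KerMem R (L ++ [c]) M := by
  refine (KerMem.trans hR (M := M ++ [c, c]) ?_ ?_ fun _ _ hd => by simp [hd])
  · simpa using h.append hR (kerMem_singleton hR c)
  · simpa using (kerMem_refl hR M).append hR (kerMem_pair_nil hR c)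

lemma KerMem.rotate_last_down {L M : List ℕ} {c : ℕ} (h : KerMem R (L ++ [c]) M) :
    KerMem R L (M ++ [c]) := by
  refine (KerMem.trans hR (M := L ++ [c, c]) ?_ ?_ fun _ hd _ => by simp [hd])
  · simpa using (kerMem_refl hR L).append hR (kerMem_nil_pair hR c)
  · simpa using h.append hR (kerMem_singleton hR c)

lemma KerMem.rotate_suffix_up {L : List ℕ} :
    ∀ {M N : List ℕ}, KerMem R L (M ++ N) → KerMem R (L ++ N.reverse) M
  | M, [], h => by simpa using h
  | M, c :: N, h => by
    simpa using (KerMem.rotate_suffix_up (M := M ++ [c]) (by simpa using h)).rotate_last_up hR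

lemma KerMem.reverse {L : List ℕ} (h : KerMem R L []) : KerMem R L.reverse [] := by
  simpa using KerMem.rotate_suffix_up hR (M := []) (h.symm hR)

lemma KerMem.conj (u : List ℕ) {L : List ℕ} (h : KerMem R L []) :
    KerMem R (u ++ L ++ u.reverse) [] :=
  KerMem.rotate_suffix_up hR (M := []) (by simpa using (kerMem_refl hR u).append hR h)

lemma kerMem_append_cons_cons_iff {A B : List ℕ} (c : ℕ) :
    KerMem R (A ++ c :: c :: B) [] ↔ KerMem R (A ++ B) [] := by
  constructor <;> refine fun h => KerMem.trans hR ?_ h fun _ _ hd => absurd hd List.not_mem_nil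
  · simpa using ((kerMem_refl hR A).append hR (kerMem_nil_pair hR c)).append hR (kerMem_refl hR B)
  · simpa using ((kerMem_refl hR A).append hR (kerMem_pair_nil hR c)).append hR (kerMem_refl hR B)

end KerMem

section Rotation

variable {R : ∀ k l : ℕ, Set (Part k l)}

lemma rotULD_kerPart {k l : ℕ} (u : Fin (k + 1) → ℕ) (j : Fin l → ℕ) :
    rotULD (kerPart u j) = kerPart (Fin.tail u) (Fin.cons (u 0) j) :=
  congrArg Setoid.ker <| funext fun
    | .inl _ => rfl
    | .inr y => by cases y using Fin.cases <;> rfl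

lemma rotDLU_kerPart {k l : ℕ} (i : Fin k → ℕ) (v : Fin (l + 1) → ℕ) :
    rotDLU (kerPart i v) = kerPart (Fin.cons (v 0) i) (Fin.tail v) :=
  congrArg Setoid.ker <| funext fun
    | .inl x => by cases x using Fin.cases <;> rfl
    | .inr _ => rfl

lemma rotURD_kerPart {k l : ℕ} (u : Fin (k + 1) → ℕ) (j : Fin l → ℕ) :
    rotURD (kerPart u j) = kerPart (Fin.init u) (Fin.snoc j (u (Fin.last k))) :=
  congrArg Setoid.ker <| funext fun
    | .inl _ => rfl
    | .inr y => by cases y using Fin.lastCases <;> simp [rotURDmap]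

lemma rotDRU_kerPart {k l : ℕ} (i : Fin k → ℕ) (v : Fin (l + 1) → ℕ) :
    rotDRU (kerPart i v) = kerPart (Fin.snoc i (v (Fin.last l))) (Fin.init v) :=
  congrArg Setoid.ker <| funext fun
    | .inl x => by cases x using Fin.lastCases <;> simp [rotDRUmap]
    | .inr _ => rfl

variable (hR : IsSkewCategory R)
include hR

lemma rotULD_mem {k l : ℕ} {p : Part (k + 1) l} (hp : p ∈ R (k + 1) l) :
    rotULD p ∈ R k (l + 1) := by
  obtain ⟨u, j, rfl⟩ := exists_kerPart_eq p
  have h : KerMem R (u 0 :: List.ofFn (Fin.tail u)) (List.ofFn j) :=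
    ⟨_, _, u, j, List.ofFn_succ, rfl, hp⟩
  rw [rotULD_kerPart]
  exact (h.rotate_head_down hR).mem rfl (List.ofFn_cons _ _)

lemma rotDLU_mem {k l : ℕ} {p : Part k (l + 1)} (hp : p ∈ R k (l + 1)) :
    rotDLU p ∈ R (k + 1) l := by
  obtain ⟨i, v, rfl⟩ := exists_kerPart_eq p
  have h : KerMem R (List.ofFn i) (v 0 :: List.ofFn (Fin.tail v)) :=
    ⟨_, _, i, v, rfl, List.ofFn_succ, hp⟩
  rw [rotDLU_kerPart]
  exact (h.rotate_head_up hR).mem (List.ofFn_cons _ _) rfl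

lemma rotURD_mem {k l : ℕ} {p : Part (k + 1) l} (hp : p ∈ R (k + 1) l) :
    rotURD p ∈ R k (l + 1) := by
  obtain ⟨u, j, rfl⟩ := exists_kerPart_eq p
  have h : KerMem R (List.ofFn (Fin.init u) ++ [u (Fin.last k)]) (List.ofFn j) :=
    ⟨_, _, u, j, ofFn_eq_ofFn_init_append u, rfl, hp⟩
  rw [rotURD_kerPart]
  exact (h.rotate_last_down hR).mem rfl (ofFn_snoc _ _)

lemma rotDRU_mem {k l : ℕ} {p : Part k (l + 1)} (hp : p ∈ R k (l + 1)) :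
    rotDRU p ∈ R (k + 1) l := by
  obtain ⟨i, v, rfl⟩ := exists_kerPart_eq p
  have h : KerMem R (List.ofFn i) (List.ofFn (Fin.init v) ++ [v (Fin.last l)]) :=
    ⟨_, _, i, v, rfl, ofFn_eq_ofFn_init_append v, hp⟩
  rw [rotDRU_kerPart]
  exact (h.rotate_last_up hR).mem (ofFn_snoc _ _) rfl

lemma IsSkewCategory.rotationClosed : RotationClosed R := by
  suffices ∀ {s t : Σ k l : ℕ, Part k l}, Relation.ReflTransGen BasicRot s t →
      s.2.2 ∈ R s.1 s.2.1 → t.2.2 ∈ R t.1 t.2.1 from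
    fun {_ _ _ _} _ _ hp hpq => this hpq hp
  intro s t hst hs
  induction hst with
  | refl => exact hs
  | tail _ hstep ih =>
    cases hstep with
    | uld p => exact rotULD_mem hR ih
    | dlu p => exact rotDLU_mem hR ih
    | urd p => exact rotURD_mem hR ih
    | dru p => exact rotDRU_mem hR ih

end Rotation

section BlockCount

variable {k l : ℕ}

lemma rotDLUmap_rotULDmap (x : Fin k ⊕ Fin (l + 1)) : rotDLUmap k l (rotULDmap k l x) = x := by
  rcases x with x | y
  · rfl
  · cases y using Fin.cases <;> rfl

lemma rotULDmap_rotDLUmap (x : Fin (k + 1) ⊕ Fin l) : rotULDmap k l (rotDLUmap k l x) = x := by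
  rcases x with x | y
  · cases x using Fin.cases <;> rfl
  · rfl

lemma rotDRUmap_rotURDmap (x : Fin k ⊕ Fin (l + 1)) : rotDRUmap k l (rotURDmap k l x) = x := by
  rcases x with x | y
  · simp [rotURDmap, rotDRUmap]
  · cases y using Fin.lastCases <;> simp [rotURDmap, rotDRUmap]

lemma rotURDmap_rotDRUmap (x : Fin (k + 1) ⊕ Fin l) : rotURDmap k l (rotDRUmap k l x) = x := by
  rcases x with x | y
  · cases x using Fin.lastCases <;> simp [rotURDmap, rotDRUmap]
  · simp [rotURDmap, rotDRUmap]

def rotULDEquiv (k l : ℕ) : Fin k ⊕ Fin (l + 1) ≃ Fin (k + 1) ⊕ Fin l :=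
  ⟨rotULDmap k l, rotDLUmap k l, rotDLUmap_rotULDmap, rotULDmap_rotDLUmap⟩

def rotURDEquiv (k l : ℕ) : Fin k ⊕ Fin (l + 1) ≃ Fin (k + 1) ⊕ Fin l :=
  ⟨rotURDmap k l, rotDRUmap k l, rotDRUmap_rotURDmap, rotURDmap_rotDRUmap⟩

lemma rotULD_rotDLU (p : Part k (l + 1)) : rotULD (rotDLU p) = p :=
  Setoid.ext fun x y => by
    show p (rotDLUmap k l (rotULDmap k l x)) (rotDLUmap k l (rotULDmap k l y)) ↔ p x y
    rw [rotDLUmap_rotULDmap, rotDLUmap_rotULDmap]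

lemma blockCount_comap_equiv {k' l' : ℕ} (e : Fin k ⊕ Fin l ≃ Fin k' ⊕ Fin l')
    (p : Part k' l') : blockCount (Setoid.comap e p) = blockCount p :=
  Nat.card_congr (Quotient.congr e fun _ _ => Iff.rfl)

lemma blockCount_eq_of_isRotationOf {k' l' : ℕ} {p : Part k l} {q : Part k' l'}
    (h : IsRotationOf ⟨k', l', q⟩ ⟨k, l, p⟩) : blockCount q = blockCount p := by
  suffices ∀ {s t : Σ k l : ℕ, Part k l}, Relation.ReflTransGen BasicRot s t →
      blockCount t.2.2 = blockCount s.2.2 from this h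
  intro s t hst
  induction hst with
  | refl => rfl
  | tail _ hstep ih =>
    refine Eq.trans ?_ ih
    cases hstep with
    | uld p => exact blockCount_comap_equiv (rotULDEquiv _ _) p
    | dlu p => exact blockCount_comap_equiv (rotULDEquiv _ _).symm p
    | urd p => exact blockCount_comap_equiv (rotURDEquiv _ _) p
    | dru p => exact blockCount_comap_equiv (rotURDEquiv _ _).symm p

end BlockCount

lemma exists_rotation_with_empty_lower_row :
    ∀ {l k : ℕ} (p : Part k l), ∃ (m : ℕ) (σ : Part m 0),
      IsRotationOf ⟨k, l, p⟩ ⟨m, 0, σ⟩ ∧ IsRotationOf ⟨m, 0, σ⟩ ⟨k, l, p⟩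
  | 0, k, p => ⟨k, p, .refl, .refl⟩
  | _ + 1, _, p => by
    obtain ⟨m, σ, h₁, h₂⟩ := exists_rotation_with_empty_lower_row (rotDLU p)
    refine ⟨m, σ, h₁.tail ?_, h₂.head (.dlu p)⟩
    simpa only [rotULD_rotDLU] using BasicRot.uld (rotDLU p)

section Words

def listWord (L : List ℕ) : FreeZ2 := (L.map gen).prod

lemma listWord_append (L M : List ℕ) : listWord (L ++ M) = listWord L * listWord M := by
  simp [listWord]

lemma gen_mul_self (c : ℕ) : gen c * gen c = 1 := by
  rw [gen, ← map_mul]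
  exact (congrArg _ (by decide)).trans (map_one _)

lemma gen_inv (c : ℕ) : (gen c)⁻¹ = gen c :=
  inv_eq_of_mul_eq_one_right (gen_mul_self c)

lemma listWord_reverse (L : List ℕ) : listWord L.reverse = (listWord L)⁻¹ := by
  simp [listWord, List.prod_inv_reverse, gen_inv, Function.comp_def, List.map_reverse]

lemma listWord_append_cons_cons_self (A B : List ℕ) (c : ℕ) :
    listWord (A ++ c :: c :: B) = listWord (A ++ B) := by
  simp [listWord, ← mul_assoc, gen_mul_self]

lemma aWord_eq_listWord {k : ℕ} (i : Fin k → ℕ) : aWord i = listWord (List.ofFn i) := by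
  simp [aWord, listWord, List.map_ofFn]
  rfl

lemma exists_listWord_eq (g : FreeZ2) : ∃ L, listWord L = g := by
  induction g using Monoid.CoprodI.induction_on with
  | one => exact ⟨[], rfl⟩
  | of i x =>
    obtain rfl | rfl : x = 1 ∨ x = Multiplicative.ofAdd 1 := by revert x; decide
    · exact ⟨[], (map_one _).symm⟩
    · exact ⟨[i], by simp [listWord, gen]⟩
  | mul x y hx hy =>
    obtain ⟨L, rfl⟩ := hx
    obtain ⟨M, rfl⟩ := hy
    exact ⟨L ++ M, listWord_append L M⟩

def reducedWord (L : List ℕ) (hL : L.IsChain (· ≠ ·)) : Monoid.CoprodI.Word (fun _ : ℕ => Z2) where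
  toList := L.map fun c => ⟨c, Multiplicative.ofAdd 1⟩
  ne_one _ hl := by
    obtain ⟨c, _, rfl⟩ := List.mem_map.mp hl
    exact (by decide : Multiplicative.ofAdd (1 : ZMod 2) ≠ 1)
  chain_ne := List.isChain_map _ |>.mpr hL

lemma reducedWord_prod (L : List ℕ) (hL : L.IsChain (· ≠ ·)) :
    (reducedWord L hL).prod = listWord L := by
  simp only [Monoid.CoprodI.Word.prod, reducedWord, List.map_map, listWord]
  rfl

lemma eq_of_listWord_eq_of_isChain_ne {L L' : List ℕ} (hL : L.IsChain (· ≠ ·))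
    (hL' : L'.IsChain (· ≠ ·)) (hw : listWord L = listWord L') : L = L' := by
  have h : reducedWord L hL = reducedWord L' hL' := Monoid.CoprodI.Word.equiv.symm.injective <|
    (reducedWord_prod L hL).trans (hw.trans (reducedWord_prod L' hL').symm)
  simpa [reducedWord, List.map_map, Function.comp_def] using congrArg
    (fun w : Monoid.CoprodI.Word (fun _ : ℕ => Z2) => w.toList.map Sigma.fst) h

end Words

section Finfty

variable {R : ∀ k l : ℕ, Set (Part k l)} (hR : IsSkewCategory R)
include hR

lemma exists_isChain_ne_listWord_eq (L : List ℕ) :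
    ∃ L', L'.IsChain (· ≠ ·) ∧ listWord L' = listWord L ∧ (KerMem R L' [] ↔ KerMem R L []) := by
  by_cases hL : L.IsChain (· ≠ ·)
  · exact ⟨L, hL, rfl, Iff.rfl⟩
  obtain ⟨c, _, A, B, hAB, rfl⟩ : ∃ a b A B, L = A ++ a :: b :: B ∧ a = b := by
    simpa [List.isChain_iff_forall_rel_of_append_cons_cons] using hL
  have : (A ++ B).length < L.length := by simp [hAB]
  obtain ⟨L', hL', hw, hmem⟩ := exists_isChain_ne_listWord_eq (A ++ B)
  subst hAB
  exact ⟨L', hL', hw.trans (listWord_append_cons_cons_self A B c).symm,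
    hmem.trans (kerMem_append_cons_cons_iff hR c).symm⟩
termination_by L.length

lemma KerMem.of_listWord_eq {L L' : List ℕ} (h : KerMem R L [])
    (hw : listWord L = listWord L') : KerMem R L' [] := by
  obtain ⟨M, hM, hwM, hmemM⟩ := exists_isChain_ne_listWord_eq hR L
  obtain ⟨M', hM', hwM', hmemM'⟩ := exists_isChain_ne_listWord_eq hR L'
  obtain rfl := eq_of_listWord_eq_of_isChain_ne hM hM' (hwM.trans (hw.trans hwM'.symm))
  exact hmemM'.mp (hmemM.mpr h)

lemma listWord_mem_Finfty_iff {L : List ℕ} : listWord L ∈ Finfty R ↔ KerMem R L [] := by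
  constructor
  · rintro ⟨k, i, hi, hw⟩
    exact KerMem.of_listWord_eq hR ⟨k, 0, i, Fin.elim0, rfl, rfl, hi⟩
      ((aWord_eq_listWord i).symm.trans hw.symm)
  · intro h
    exact ⟨L.length, L.get, h.mem (List.ofFn_get L) rfl, by rw [aWord_eq_listWord, List.ofFn_get]⟩

lemma kerPart0_mem_of_aWord_mem_Finfty {k : ℕ} {i : Fin k → ℕ} (h : aWord i ∈ Finfty R) :
    kerPart0 i ∈ R k 0 :=
  ((listWord_mem_Finfty_iff hR).mp (aWord_eq_listWord i ▸ h)).mem rfl rfl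

def finftySubgroup : Subgroup FreeZ2 where
  carrier := Finfty R
  one_mem' := (listWord_mem_Finfty_iff hR (L := [])).mpr (kerMem_nil hR)
  mul_mem' {a b} ha hb := by
    obtain ⟨L, rfl⟩ := exists_listWord_eq a
    obtain ⟨M, rfl⟩ := exists_listWord_eq b
    rw [listWord_mem_Finfty_iff hR] at ha hb
    rw [← listWord_append, listWord_mem_Finfty_iff hR]
    exact ha.append hR hb
  inv_mem' {a} ha := by
    obtain ⟨L, rfl⟩ := exists_listWord_eq a
    rw [listWord_mem_Finfty_iff hR] at ha
    rw [← listWord_reverse, listWord_mem_Finfty_iff hR]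
    exact ha.reverse hR

lemma finftySubgroup_normal : (finftySubgroup hR).Normal where
  conj_mem a ha g := by
    obtain ⟨L, rfl⟩ := exists_listWord_eq a
    obtain ⟨u, rfl⟩ := exists_listWord_eq g
    change listWord L ∈ Finfty R at ha
    change _ ∈ Finfty R
    rw [listWord_mem_Finfty_iff hR] at ha
    rw [← listWord_reverse, ← listWord_append, ← listWord_append, listWord_mem_Finfty_iff hR]
    exact ha.conj hR u

end Finfty

section Relabelling

variable {R : ∀ k l : ℕ, Set (Part k l)} {n : ℕ}

lemma permEndo_aWord (τ : ℕ → ℕ) {k : ℕ} (i : Fin k → ℕ) :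
    permEndo τ (aWord i) = aWord (τ ∘ i) := by
  simp [aWord, map_list_prod, List.map_ofFn, Function.comp_def, permEndo, gen]

lemma permEndo_mem_Finfty {τ : ℕ → ℕ} (hτ : Function.Injective τ) {g : FreeZ2}
    (hg : g ∈ Finfty R) : permEndo τ g ∈ Finfty R := by
  obtain ⟨k, i, hi, rfl⟩ := hg
  exact ⟨k, τ ∘ i, by rwa [kerPart0, kerPartA_comp_elim0_of_injective hτ], permEndo_aWord τ i⟩

lemma incl_comp_permEndon (σ : Fin n → Fin n) {τ : ℕ → ℕ} (hτ : ∀ a : Fin n, τ a = σ a) :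
    (incl n).comp (permEndon σ) = (permEndo τ).comp (incl n) :=
  Monoid.CoprodI.ext_hom _ _ fun a => by ext x; simp [incl, permEndon, permEndo, hτ]

lemma permEndon_comp (σ τ : Fin n → Fin n) :
    (permEndon σ).comp (permEndon τ) = permEndon (σ ∘ τ) :=
  Monoid.CoprodI.ext_hom _ _ fun a => by ext x; simp [permEndon]

lemma permEndon_id : permEndon (id : Fin n → Fin n) = MonoidHom.id _ :=
  Monoid.CoprodI.ext_hom _ _ fun a => by ext x; simp [permEndon]

lemma incl_permEndon_mem_Finfty (σ : Equiv.Perm (Fin n)) {g : FreeZ2n n}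
    (hg : incl n g ∈ Finfty R) : incl n (permEndon σ g) ∈ Finfty R := by
  rw [← MonoidHom.comp_apply, incl_comp_permEndon σ (τ := σ.extendDomain Fin.equivSubtype)
    fun a => by simpa using σ.extendDomain_apply_image Fin.equivSubtype a]
  exact permEndo_mem_Finfty (Equiv.injective _) hg

lemma image_permEndon_eq {S : Set (FreeZ2n n)}
    (hS : ∀ σ : Equiv.Perm (Fin n), ∀ g ∈ S, permEndon σ g ∈ S) (σ : Equiv.Perm (Fin n)) :
    permEndon σ '' S = S := by
  refine (Set.image_subset_iff.mpr (hS σ)).antisymm fun g hg => ⟨permEndon ⇑σ⁻¹ g, hS _ g hg, ?_⟩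
  rw [← MonoidHom.comp_apply, permEndon_comp, ← Equiv.Perm.coe_mul, mul_inv_cancel,
    Equiv.Perm.coe_one, permEndon_id, MonoidHom.id_apply]

end Relabelling

theorem Fn_normalSubgroup_and_Rn_general (R : ∀ k l : ℕ, Set (Part k l))
    (hR : IsSkewCategory R) (n : ℕ) :
    (∃ Nn : Subgroup (FreeZ2n n),
      (Nn : Set (FreeZ2n n)) = incl n ⁻¹' Finfty R ∧ Nn.Normal ∧
        ∀ σ : Equiv.Perm (Fin n),
          permEndon ⇑σ '' (Nn : Set (FreeZ2n n)) = (Nn : Set (FreeZ2n n))) ∧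
    ∀ (k l : ℕ) (p : Part k l),
      (p ∈ R k l ∧ blockCount p ≤ n) ↔
        ∃ (k' : ℕ) (i : Fin k' → Fin n),
          aWord (fun x => (i x : ℕ)) ∈ Finfty R ∧
          IsRotationOf ⟨k, l, p⟩ ⟨k', 0, kerPart0 (fun x => (i x : ℕ))⟩ := by
  refine ⟨⟨(finftySubgroup hR).comap (incl n), rfl, (finftySubgroup_normal hR).comap _,
    image_permEndon_eq fun σ _ => incl_permEndon_mem_Finfty σ⟩, fun k l p => ⟨?_, ?_⟩⟩
  · rintro ⟨hp, hblocks⟩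
    obtain ⟨m, σ, hpσ, hσp⟩ := exists_rotation_with_empty_lower_row p
    obtain ⟨i, rfl⟩ :=
      exists_kerPart0_fin_eq σ ((blockCount_eq_of_isRotationOf hσp).trans_le hblocks)
    exact ⟨m, i, ⟨m, _, hR.rotationClosed p _ hp hσp, rfl⟩, hpσ⟩
  · rintro ⟨k', i, hi, hrot⟩
    exact ⟨hR.rotationClosed _ p (kerPart0_mem_of_aWord_mem_Finfty hR hi) hrot,
      (blockCount_eq_of_isRotationOf hrot).trans_le (blockCount_kerPart0_fin_le i)⟩

/-- For a skew category of partitions `R` and `n ∈ ℕ`,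
`F_n(R) = F_∞(R) ∩ ℤ₂^{*n}` is an `S_n`-invariant normal subgroup of
`ℤ₂^{*n}`, and `R_n` (the partitions of `R` with at most `n` blocks) consists
exactly of the rotations of partitions `ker(i)` with `a_i ∈ F_n(R)`. -/
theorem Fn_normalSubgroup_and_Rn (R : ∀ k l : ℕ, Set (Part k l))
    (hR : IsSkewCategory R) (n : ℕ) (hn : 0 < n) :
    (∃ Nn : Subgroup (FreeZ2n n),
      (Nn : Set (FreeZ2n n)) = incl n ⁻¹' Finfty R ∧ Nn.Normal ∧
        ∀ σ : Equiv.Perm (Fin n),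
          permEndon ⇑σ '' (Nn : Set (FreeZ2n n)) = (Nn : Set (FreeZ2n n))) ∧
    ∀ (k l : ℕ) (p : Part k l),
      (p ∈ R k l ∧ blockCount p ≤ n) ↔
        ∃ (k' : ℕ) (i : Fin k' → Fin n),
          aWord (fun x => (i x : ℕ)) ∈ Finfty R ∧
          IsRotationOf ⟨k, l, p⟩ ⟨k', 0, kerPart0 (fun x => (i x : ℕ))⟩ :=
  Fn_normalSubgroup_and_Rn_general R hR n

end GTQG
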